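/- arXiv:1205.6432 — 3 statements merged into one kernel-verified Lean document; each statement's English description precedes it below -/
import Mathlib

section
/- For all integers d, k ≥ 2 and every tree T for k classes, the Natarajan dimension of W^d_T, the class of tree classifiers over T whose internal-node classifiers are halfspaces over ℝ^d, is at least d·(k−1). -/
open MeasureTheory
open scoped ENNReal

noncomputable def argmaxFin {k : ℕ} [NeZero k] (f : Fin k → ℝ) : Fin k :=
  (Finset.univ.filter fun i => ∀ j, f j ≤ f i).min' (by
    obtain ⟨i, -, hi⟩ := Finset.exists_max_image (Finset.univ : Finset (Fin k)) f
      ⟨⟨0, Nat.pos_of_ne_zero (NeZero.ne k)⟩, Finset.mem_univ _⟩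
    exact ⟨i, Finset.mem_filter.mpr ⟨Finset.mem_univ _, fun j => hi j (Finset.mem_univ _)⟩⟩)

def aug {d : ℕ} (x : Fin d → ℝ) : Fin (d + 1) → ℝ := Fin.snoc x 1

/-- halfspaces over ℝ^d, `true` ↔ +1, sign(0) = 1 -/
def halfspace (d : ℕ) : Set ((Fin d → ℝ) → Bool) :=
  { h | ∃ w : Fin (d + 1) → ℝ, h = fun x => decide (0 ≤ ∑ i, w i * aug x i) }

noncomputable def msvm (d k : ℕ) [NeZero k] : Set ((Fin d → ℝ) → Fin k) :=
  { h | ∃ W : Fin k → Fin (d + 1) → ℝ,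
      h = fun x => argmaxFin (fun i => ∑ j, W i j * aug x j) }

def NShatters {X Y : Type*} (H : Set (X → Y)) (S : Set X) : Prop :=
  ∃ f₁ f₂ : X → Y, (∀ x ∈ S, f₁ x ≠ f₂ x) ∧
    ∀ T ⊆ S, ∃ g ∈ H, (∀ x ∈ T, g x = f₁ x) ∧ ∀ x ∈ S \ T, g x = f₂ x

def GShatters {X Y : Type*} (H : Set (X → Y)) (S : Set X) : Prop :=
  ∃ f : X → Y, ∀ T ⊆ S, ∃ g ∈ H, (∀ x ∈ T, g x = f x) ∧ ∀ x ∈ S \ T, g x ≠ f x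

def VCDimLE {X : Type*} (H : Set (X → Bool)) (d : ℕ) : Prop :=
  ∀ S : Finset X, (∀ b : X → Bool, ∃ h ∈ H, ∀ x ∈ S, h x = b x) → S.card ≤ d

inductive LTree (k : ℕ) : Type where
  | leaf : Fin k → LTree k
  | node : LTree k → LTree k → LTree k

def LTree.labels {k : ℕ} : LTree k → List (Fin k)
  | .leaf i => [i]
  | .node l r => l.labels ++ r.labels

/-- `T` is a tree for `k` classes: its leaf labels form a bijection with `[k]`. -/
def LTree.IsTreeFor {k : ℕ} (T : LTree k) : Prop := T.labels.Perm (List.finRange k)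

def treeClass {X : Type*} {k : ℕ} (H : Set (X → Bool)) : LTree k → Set (X → Fin k)
  | .leaf i => {fun _ => i}
  | .node l r => { f | ∃ c ∈ H, ∃ fl ∈ treeClass H l, ∃ fr ∈ treeClass H r,
      f = fun x => if c x then fr x else fl x }

def treesClass {X : Type*} (H : Set (X → Bool)) (k : ℕ) : Set (X → Fin k) :=
  ⋃ T ∈ { T : LTree k | T.IsTreeFor }, treeClass H T

noncomputable def decode {k : ℕ} [NeZero k] {J : Type*} [Fintype J]
    (M : Fin k → J → ℝ) (u : J → Bool) : Fin k :=
  argmaxFin (fun i => ∑ j, M i j * (if u j then (1 : ℝ) else -1))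

noncomputable def ecocClass {X : Type*} {k : ℕ} [NeZero k] {J : Type*} [Fintype J]
    (H : Set (X → Bool)) (M : Fin k → J → ℝ) : Set (X → Fin k) :=
  { g | ∃ h : J → X → Bool, (∀ j, h j ∈ H) ∧ g = fun x => decode M (fun j => h j x) }

def ovaCode (k : ℕ) : Fin k → Fin k → ℝ := fun i j => if i = j then 1 else -1

def apCode (k : ℕ) : Fin k → { p : Fin k × Fin k // p.1 < p.2 } → ℝ :=
  fun i p => if i = p.1.1 then -1 else if i = p.1.2 then 1 else 0

noncomputable def errStar {X : Type*} [MeasurableSpace X] {k : ℕ}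
    (D : Measure (X × Fin k)) (H : Set (X → Fin k)) : ℝ≥0∞ :=
  ⨅ h ∈ H, D { p | h p.1 ≠ p.2 }

noncomputable def errStarBin {X : Type*} [MeasurableSpace X]
    (Q : Measure (X × Bool)) (H : Set (X → Bool)) : ℝ≥0∞ :=
  ⨅ h ∈ H, Q { p | h p.1 ≠ p.2 }

inductive PTree : Type where
  | leaf : PTree
  | node : PTree → PTree → PTree

def PTree.nLeaves : PTree → ℕ
  | .leaf => 1
  | .node l r => l.nLeaves + r.nLeaves

def PTree.leftLeaves : PTree → ℕ
  | .leaf => 0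
  | .node l _ => l.nLeaves

def PTree.rightLeaves : PTree → ℕ
  | .leaf => 0
  | .node _ r => r.nLeaves

def PTree.labelAux {k : ℕ} (f : ℕ → Fin k) : PTree → ℕ → LTree k
  | .leaf, n => .leaf (f n)
  | .node l r, n => .node (PTree.labelAux f l n) (PTree.labelAux f r (n + l.nLeaves))

/-!
Number the `k - 1` internal nodes of `T` in order, and attach to node `m` a group of `d` points:
`m • e₀` and `m • e₀ + eₜ` for `t ≠ 0`. A halfspace can cut the first coordinate between `m - 1`
and `m + 1` while realising an arbitrary sign pattern on group `m`. Placing such a halfspace at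
every node, a point of group `m` goes right at the nodes before `m`, left at the nodes after `m`,
and at node `m` follows its own bit; it therefore reaches the leftmost leaf of the right subtree of
`m` or the rightmost leaf of its left subtree, two distinct labels. So the `d (k - 1)` points are
Natarajan-shattered.
-/

namespace LTree

variable {k : ℕ}

def numNodes : LTree k → ℕ
  | .leaf _ => 0
  | .node l r => l.numNodes + r.numNodes + 1

/-- The leaf reached from the root when the internal nodes, numbered in order starting at `o`,
send the walk right exactly at the indices `j` with `go j`. -/
def descend : LTree k → ℕ → (ℕ → Bool) → Fin k
  | .leaf i, _, _ => i
  | .node l r, o, go =>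
      if go (o + l.numNodes) then r.descend (o + l.numNodes + 1) go else l.descend o go

theorem length_labels (T : LTree k) : T.labels.length = T.numNodes + 1 := by
  induction T with
  | leaf i => rfl
  | node l r ihl ihr => simp only [labels, numNodes, List.length_append, ihl, ihr]; omega

theorem descend_mem_labels (T : LTree k) (o : ℕ) (go : ℕ → Bool) :
    T.descend o go ∈ T.labels := by
  induction T generalizing o with
  | leaf i => simp [descend, labels]
  | node l r ihl ihr =>
    simp only [descend, labels, List.mem_append]
    split_ifs
    exacts [Or.inr (ihr _), Or.inl (ihl _)]

/-- Going right at the nodes `≤ m` and going right at the nodes `< m` differ only at node `m`,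
where the two walks split into disjoint subtrees. -/
theorem descend_le_ne_descend_lt {T : LTree k} (hT : T.labels.Nodup) {o m : ℕ}
    (hom : o ≤ m) (hm : m < o + T.numNodes) :
    T.descend o (fun j => decide (j ≤ m)) ≠ T.descend o (fun j => decide (j < m)) := by
  induction T generalizing o with
  | leaf i => simp only [numNodes] at hm; omega
  | node l r ihl ihr =>
    obtain ⟨hl, hr, hlr⟩ := List.nodup_append.mp hT
    simp only [numNodes] at hm
    rcases lt_trichotomy m (o + l.numNodes) with hlt | rfl | hgt
    · simpa [descend, Nat.not_le.mpr hlt, Nat.lt_asymm hlt] using ihl hl hom hlt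
    · simp only [descend, le_refl, decide_true, lt_irrefl, decide_false, if_true]
      exact fun h => hlr _ (descend_mem_labels l _ _) _ (descend_mem_labels r _ _) h.symm
    · simpa [descend, hgt.le, hgt] using ihr hr hgt (by omega)

theorem descend_mem_treeClass {X : Type*} {H : Set (X → Bool)} {c : ℕ → X → Bool}
    (hc : ∀ j, c j ∈ H) (T : LTree k) (o : ℕ) :
    (fun x => T.descend o (fun j => c j x)) ∈ treeClass H T := by
  induction T generalizing o with
  | leaf i => rfl
  | node l r ihl ihr => exact ⟨c (o + l.numNodes), hc _, _, ihl o, _, ihr _, rfl⟩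

end LTree

def SplitsLevels {X : Type*} (H : Set (X → Bool)) (lvl : X → ℕ) (P : Set X) : Prop :=
  ∀ (j : ℕ) (s : X → Bool), ∃ c ∈ H, ∀ x ∈ P, c x = if lvl x = j then s x else decide (j < lvl x)

theorem nShatters_treeClass_of_splitsLevels {X : Type*} {H : Set (X → Bool)} {lvl : X → ℕ}
    {P : Set X} (hH : SplitsLevels H lvl P) {k : ℕ} {T : LTree k} (hT : T.labels.Nodup)
    {S : Set X} (hSP : S ⊆ P) (hS : ∀ x ∈ S, lvl x < T.numNodes) :
    NShatters (treeClass H T) S := by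
  classical
  refine ⟨fun x => T.descend 0 (fun j => decide (j ≤ lvl x)),
    fun x => T.descend 0 (fun j => decide (j < lvl x)),
    fun x hx => LTree.descend_le_ne_descend_lt hT (Nat.zero_le _) (by simpa using hS x hx),
    fun T' hT' => ?_⟩
  choose c hcH hc using fun j => hH j (fun x => decide (x ∈ T'))
  have hroute : ∀ x ∈ P, (fun j => c j x) =
      if x ∈ T' then fun j => decide (j ≤ lvl x) else fun j => decide (j < lvl x) := by
    intro x hx
    funext j
    rw [hc j x hx]
    split_ifs <;> grind
  refine ⟨_, LTree.descend_mem_treeClass hcH T 0, fun x hx => ?_, fun x hx => ?_⟩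
  · simp only [hroute x (hSP (hT' hx)), hx, if_true]
  · simp only [hroute x (hSP hx.1), hx.2, if_false]

theorem affine_mem_halfspace {d : ℕ} (v : Fin d → ℝ) (b : ℝ) :
    (fun x => decide (0 ≤ ∑ t, v t * x t + b)) ∈ halfspace d :=
  ⟨Fin.snoc v b, by funext x; simp [aug, Fin.sum_univ_castSucc]⟩

noncomputable def groupPoint (n m : ℕ) (i : Option (Fin n)) : Fin (n + 1) → ℝ :=
  Fin.cons (m : ℝ) (i.elim 0 fun j => Pi.single j 1)

theorem groupPoint_zero (n m : ℕ) (i : Option (Fin n)) : groupPoint n m i 0 = m := rfl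

theorem groupPoint_injective (n : ℕ) :
    Function.Injective fun p : ℕ × Option (Fin n) => groupPoint n p.1 p.2 := by
  rintro ⟨m, i⟩ ⟨m', i'⟩ h
  obtain ⟨hm, hi⟩ := Fin.cons_inj.mp h
  refine Prod.ext (Nat.cast_injective hm) ?_
  rcases i with _ | j <;> rcases i' with _ | j'
  · rfl
  · simpa using congrFun hi j'
  · simpa using congrFun hi j
  · simpa [Pi.single_apply, eq_comm] using congrFun hi j'

theorem sum_mul_groupPoint (n m : ℕ) (i : Option (Fin n)) (a : Fin n → ℝ) :
    ∑ t, (Fin.cons 1 a : Fin (n + 1) → ℝ) t * groupPoint n m i t = m + i.elim 0 a := by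
  rcases i with _ | j <;> simp [Fin.sum_univ_succ, groupPoint, Pi.single_apply]

theorem decide_nonneg_sub_add_sign (m j : ℕ) (b : Bool) :
    decide (0 ≤ (m : ℝ) - j + (if b then 1 else -1) / 8) = if m = j then b else decide (j < m) := by
  rcases lt_trichotomy m j with h | rfl | h
  · have : (m : ℝ) + 1 ≤ j := by exact_mod_cast h
    have : ¬ (0 ≤ (m : ℝ) - j + (if b then 1 else -1) / 8) := by split_ifs <;> linarith
    simp [*, h.ne, Nat.lt_asymm h]
  · cases b <;> norm_num
  · have : (j : ℝ) + 1 ≤ m := by exact_mod_cast h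
    have : 0 ≤ (m : ℝ) - j + (if b then 1 else -1) / 8 := by split_ifs <;> linarith
    simp [*, h.ne']

/-- With `σ` the `±1` pattern wanted on group `j`, the affine form
`x₀ - j + σ(none)/8 + ∑ₜ (σ(some t) - σ(none))/8 · x_{t+1}` takes the value `m - j + σ(i)/8`
at `groupPoint n m i`. -/
theorem splitsLevels_halfspace (n : ℕ) :
    SplitsLevels (halfspace (n + 1)) (fun x => ⌊x 0⌋₊)
      (Set.range fun p : ℕ × Option (Fin n) => groupPoint n p.1 p.2) := by
  intro j s
  let σ : Option (Fin n) → ℝ := fun i => if s (groupPoint n j i) then 1 else -1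
  refine ⟨_, affine_mem_halfspace (Fin.cons 1 fun t => (σ (some t) - σ none) / 8)
    (σ none / 8 - j), ?_⟩
  rintro _ ⟨⟨m, i⟩, rfl⟩
  have hval : (m : ℝ) + i.elim 0 (fun t => (σ (some t) - σ none) / 8) + (σ none / 8 - j)
      = m - j + σ i / 8 := by
    rcases i with _ | t <;> simp only [Option.elim] <;> ring
  simp only [sum_mul_groupPoint, hval, groupPoint_zero, Nat.floor_natCast, σ]
  rw [decide_nonneg_sub_add_sign]
  split_ifs with h <;> simp [h]

theorem stmt3_general (d k : ℕ) (hd : 2 ≤ d) (T : LTree k) (hT : T.IsTreeFor) :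
    ∃ S : Finset (Fin d → ℝ), NShatters (treeClass (halfspace d) T) ↑S ∧
      d * (k - 1) ≤ S.card := by
  obtain ⟨n, rfl⟩ : ∃ n, d = n + 1 := ⟨d - 1, by omega⟩
  have hnodes : T.numNodes = k - 1 := by
    have h := hT.length_eq
    rw [T.length_labels, List.length_finRange] at h
    omega
  let S := (Finset.range T.numNodes ×ˢ Finset.univ).image
    fun p : ℕ × Option (Fin n) => groupPoint n p.1 p.2
  refine ⟨S, nShatters_treeClass_of_splitsLevels (splitsLevels_halfspace n)
    (hT.nodup_iff.mpr (List.nodup_finRange k)) ?_ ?_, ?_⟩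
  · intro x hx
    obtain ⟨p, -, rfl⟩ := Finset.mem_coe.mp hx |> Finset.mem_image.mp
    exact ⟨p, rfl⟩
  · intro x hx
    obtain ⟨p, hp, rfl⟩ := Finset.mem_coe.mp hx |> Finset.mem_image.mp
    simpa [groupPoint_zero] using (Finset.mem_product.mp hp).1
  · rw [Finset.card_image_of_injective _ (groupPoint_injective n), Finset.card_product,
      Finset.card_range, Finset.card_univ, Fintype.card_option, Fintype.card_fin, hnodes,
      mul_comm]

/-- For all integers d, k ≥ 2 and every tree T for k classes, the Natarajan
dimension of W^d_T (tree classifiers over T with halfspaces over ℝ^d at internal nodes) is at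
least d·(k−1). -/
theorem stmt3 (d k : ℕ) (hd : 2 ≤ d) (hk : 2 ≤ k) (T : LTree k) (hT : T.IsTreeFor) :
    ∃ S : Finset (Fin d → ℝ), NShatters (treeClass (halfspace d) T) ↑S ∧
      d * (k - 1) ≤ S.card :=
  stmt3_general d k hd T hT
end

section
/- There exists a universal constant C > 0 such that for all integers d, l ≥ 2, every k ≥ 2, every code matrix M ∈ ℝ^{k×l}, and every binary hypothesis class H ⊆ {±1}^X of VC dimension at most d, the graph dimension of the ECOC class H_M satisfies d_G(H_M) ≤ C·d·l·log(d·l). -/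
open MeasureTheory
open scoped ENNReal

/-!
By the Sauer–Shelah lemma a class of VC dimension `d` cuts at most `(n + 1) ^ d` subsets out of an
`n`-point set `S`. On `S`, a member of the ECOC class is determined by the traces of its `l`
binary classifiers, so it shows at most `(n + 1) ^ (d * l)` behaviours; G-shattering `S` needs
`2 ^ n` of them. The inequality `2 ^ n ≤ (n + 1) ^ (d * l)` forces `n ≤ 5 d l log (d l)`.
-/

open Finset

theorem Nat.sum_range_choose_le_add_one_pow (n d : ℕ) :
    ∑ i ∈ range (d + 1), n.choose i ≤ (n + 1) ^ d := by
  induction d with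
  | zero => simp
  | succ d ih =>
    have hlast : n.choose (d + 1) ≤ n * (n + 1) ^ d :=
      calc n.choose (d + 1) ≤ n ^ (d + 1) := Nat.choose_le_pow n (d + 1)
        _ = n * n ^ d := pow_succ' ..
        _ ≤ n * (n + 1) ^ d := Nat.mul_le_mul_left _ (Nat.pow_le_pow_left n.le_succ d)
    calc ∑ i ∈ range (d + 1 + 1), n.choose i
        = ∑ i ∈ range (d + 1), n.choose i + n.choose (d + 1) := sum_range_succ _ _
      _ ≤ (n + 1) ^ d + n * (n + 1) ^ d := Nat.add_le_add ih hlast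
      _ = (n + 1) ^ (d + 1) := by ring

theorem Finset.card_filter_powerset_card_le {α : Type*} (S : Finset α) (d : ℕ) :
    #(S.powerset.filter (#· ≤ d)) ≤ (#S + 1) ^ d := by
  classical
  calc #(S.powerset.filter (#· ≤ d))
      ≤ #((range (d + 1)).biUnion fun i => S.powersetCard i) := by
        refine card_le_card fun s hs => ?_
        rw [mem_filter, mem_powerset] at hs
        exact mem_biUnion.2
          ⟨#s, mem_range.2 (Nat.lt_succ_of_le hs.2), mem_powersetCard.2 ⟨hs.1, rfl⟩⟩
    _ ≤ ∑ i ∈ range (d + 1), #(S.powersetCard i) := card_biUnion_le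
    _ = ∑ i ∈ range (d + 1), (#S).choose i := by simp only [card_powersetCard]
    _ ≤ (#S + 1) ^ d := Nat.sum_range_choose_le_add_one_pow _ _

section Traces

variable {X : Type*} {H : Set (X → Bool)} {S : Finset X}

open Classical in
noncomputable def traces (H : Set (X → Bool)) (S : Finset X) : Finset (Finset X) :=
  S.powerset.filter fun t => ∃ h ∈ H, S.filter (h · = true) = t

theorem mem_traces {t : Finset X} :
    t ∈ traces H S ↔ t ⊆ S ∧ ∃ h ∈ H, S.filter (h · = true) = t := by
  classical
  rw [traces, mem_filter, mem_powerset]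

theorem filter_mem_traces {h : X → Bool} (hh : h ∈ H) : S.filter (h · = true) ∈ traces H S :=
  mem_traces.2 ⟨filter_subset _ _, h, hh, rfl⟩

theorem subset_of_shatters_traces [DecidableEq X] {s : Finset X} (hs : (traces H S).Shatters s) :
    s ⊆ S := by
  obtain ⟨u, hu, hsu⟩ := hs.exists_superset
  exact hsu.trans (mem_traces.1 hu).1

theorem card_le_of_shatters_traces [DecidableEq X] {d : ℕ} (hH : VCDimLE H d) {s : Finset X}
    (hs : (traces H S).Shatters s) : #s ≤ d := by
  classical
  refine hH s fun b => ?_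
  obtain ⟨u, hu, hsu⟩ := hs (filter_subset (b · = true) s)
  obtain ⟨h, hh, rfl⟩ := (mem_traces.1 hu).2
  refine ⟨h, hh, fun x hx => Bool.eq_iff_iff.2 ?_⟩
  simpa [hx, subset_of_shatters_traces hs hx] using congrArg (x ∈ ·) hsu

theorem card_traces_le {d : ℕ} (hH : VCDimLE H d) : #(traces H S) ≤ (#S + 1) ^ d := by
  classical
  refine (card_le_card_shatterer _).trans <| (card_le_card fun s hs => ?_).trans
    (S.card_filter_powerset_card_le d)
  have hs := mem_shatterer.1 hs
  exact mem_filter.2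
    ⟨mem_powerset.2 (subset_of_shatters_traces hs), card_le_of_shatters_traces hH hs⟩

end Traces

/-- Each `T ⊆ S` is the agreement set on `S` of some `g ∈ G` with the shattering witness, and
that agreement set depends only on an `a ∈ A` representing `g` on `S`. -/
theorem GShatters.two_pow_card_le {X Y β : Type*} {G : Set (X → Y)} {S : Finset X}
    (hS : GShatters G ↑S) {A : Finset β} (F : β → X → Y)
    (hA : ∀ g ∈ G, ∃ a ∈ A, ∀ x ∈ S, g x = F a x) : 2 ^ #S ≤ #A := by
  classical
  obtain ⟨f, hf⟩ := hS
  rw [← card_powerset]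
  refine card_le_card_of_surjOn (fun a => S.filter fun x => F a x = f x) fun T hT => ?_
  obtain ⟨g, hg, hgT, hgS⟩ := hf T (by exact_mod_cast mem_powerset.1 hT)
  obtain ⟨a, ha, hga⟩ := hA g hg
  refine ⟨a, ha, ext fun x => ?_⟩
  simp only [mem_filter]
  constructor
  · rintro ⟨hxS, hx⟩
    by_contra hxT
    exact hgS x ⟨hxS, hxT⟩ (hga x hxS ▸ hx)
  · intro hxT
    have hxS := mem_powerset.1 hT hxT
    exact ⟨hxS, hga x hxS ▸ hgT x hxT⟩

theorem two_pow_card_le_of_gShatters_ecocClass {X J : Type*} [Fintype J] {k : ℕ} [NeZero k]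
    {H : Set (X → Bool)} {d : ℕ} (hH : VCDimLE H d) (M : Fin k → J → ℝ) {S : Finset X}
    (hS : GShatters (ecocClass H M) ↑S) : 2 ^ #S ≤ (#S + 1) ^ (d * Fintype.card J) := by
  classical
  calc 2 ^ #S ≤ #(Fintype.piFinset fun _ : J => traces H S) := by
        refine hS.two_pow_card_le (fun t x => decode M fun j => x ∈ t j) ?_
        rintro _ ⟨h, hH, rfl⟩
        exact ⟨fun j => S.filter (h j · = true),
          Fintype.mem_piFinset.2 fun j => filter_mem_traces (hH j), fun x hx => by simp [hx]⟩
    _ = #(traces H S) ^ Fintype.card J := by simp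
    _ ≤ ((#S + 1) ^ d) ^ Fintype.card J := Nat.pow_le_pow_left (card_traces_le hH) _
    _ = (#S + 1) ^ (d * Fintype.card J) := (pow_mul ..).symm

open Real in
theorem le_mul_log_of_two_pow_le {n a : ℕ} (ha : 4 ≤ a) (h : 2 ^ n ≤ (n + 1) ^ a) :
    (n : ℝ) ≤ 5 * a * log a := by
  have ha' : (4 : ℝ) ≤ a := by exact_mod_cast ha
  have hlog8 : log (8 * a) ≤ 5 / 2 * log a := by
    have h4 : 2 * log 2 ≤ log a :=
      calc 2 * log 2 = log 4 := by rw [show (4 : ℝ) = 2 ^ 2 by norm_num, log_pow]; norm_num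
        _ ≤ log a := log_le_log (by norm_num) ha'
    rw [log_mul (by norm_num) (by positivity), show (8 : ℝ) = 2 ^ 3 by norm_num, log_pow]
    push_cast
    linarith
  have htangent : log (n + 1) ≤ log (8 * a) + (n + 1) / (8 * a) - 1 := by
    have := log_le_sub_one_of_pos (show 0 < ((n : ℝ) + 1) / (8 * a) by positivity)
    rw [log_div (by positivity) (by positivity)] at this
    linarith
  have hmain : n * log 2 ≤ 5 / 2 * a * log a + (n + 1) / 8 - a :=
    calc n * log 2 ≤ a * log (n + 1) := by
          have := log_le_log (by positivity)
            (show (2 : ℝ) ^ n ≤ ((n : ℝ) + 1) ^ a by exact_mod_cast h)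
          rwa [log_pow, log_pow] at this
      _ ≤ a * (5 / 2 * log a + (n + 1) / (8 * a) - 1) := by gcongr; linarith
      _ = 5 / 2 * a * log a + (n + 1) / 8 - a := by field_simp
  have hlog2 : (n : ℝ) * 0.6931471803 ≤ n * log 2 := by gcongr; exact log_two_gt_d9.le
  linarith

/-- There is a universal constant C > 0 such that for all integers d, l ≥ 2, every
k ≥ 2, every code matrix M ∈ ℝ^{k×l} and every binary class H of VC dimension at most d, the
graph dimension of the ECOC class H_M is at most C·d·l·log(d·l). -/
theorem stmt4 : ∃ C : ℝ, 0 < C ∧ ∀ (d l k : ℕ) [NeZero k], 2 ≤ d → 2 ≤ l → 2 ≤ k →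
    ∀ (X : Type*) (H : Set (X → Bool)) (M : Fin k → Fin l → ℝ), VCDimLE H d →
      ∀ S : Finset X, GShatters (ecocClass H M) ↑S →
        (S.card : ℝ) ≤ C * d * l * Real.log (d * l) := by
  refine ⟨5, by norm_num, fun d l k _ hd hl _ X H M hH S hS => ?_⟩
  have hcount := two_pow_card_le_of_gShatters_ecocClass hH M hS
  rw [Fintype.card_fin] at hcount
  have hdl : 4 ≤ d * l := by nlinarith
  simpa [mul_assoc] using le_mul_log_of_two_pow_le hdl hcount
end

section
/- There exists a universal constant C > 0 such that the following holds for all integers d ≥ 2, k ≥ 3, d' ≥ 2: if ι : ℝ^d → ℝ^{d'} is any map and T is a tree for k classes such that the class W^{d'}_T ∘ ι = {h ∘ ι : h ∈ W^{d'}_T} essentially contains the multiclass SVM class L over ℝ^d (i.e., Err*_D(W^{d'}_T ∘ ι) ≤ Err*_D(L) for every probability distribution D over ℝ^d × [k]), then d·(k−1) ≤ C·log₂(k)·d'·log(log₂(k)·d'). In particular, d' = Ω̃(d·k). -/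
open MeasureTheory
open scoped ENNReal

/-!
Uniform distributions on finite samples turn the error comparison into realizability: a
labelling of a finite sample that some multiclass SVM fits exactly is also fitted by
`W^{d'}_T ∘ ι`. Multiclass SVMs over `ℝ^d` can let each of `(d - 1)(k - 1)` points choose
freely between its own label and any fixed class `a`. In the tree, walk from the root into the
child with the smaller depth guarantee; this reaches a leaf `a` at depth `p` with `2^p ≤ k`. At
every node on the way, the sample points whose labels leave the current subtree are split
`a`-versus-rest by that node's halfspace alone, so there are at most `d' + 1` of them. Hence
`(d - 1)(k - 1) ≤ log₂ k · (d' + 1)`.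
-/

open Matrix

def ShattersAgainst {X Y Z : Type*} (G : Set (Y → Z)) (pts : X → Y) (a : Z) (f : X → Z) : Prop :=
  ∀ τ : X → Bool, ∃ g ∈ G, ∀ x, g (pts x) = bif τ x then a else f x

-- The witness distribution is the uniform distribution on the labelled sample.
open ProbabilityTheory in
theorem exists_mem_forall_eq_of_errStar_le {Y : Type*} [MeasurableSpace Y]
    [MeasurableSingletonClass Y] {k : ℕ} {G H : Set (Y → Fin k)}
    (hGH : ∀ D : Measure (Y × Fin k), IsProbabilityMeasure D → errStar D G ≤ errStar D H)
    {X : Type*} [Finite X] [Nonempty X] (pts : X → Y) (lbl : X → Fin k)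
    (hH : ∃ h ∈ H, ∀ x, h (pts x) = lbl x) : ∃ g ∈ G, ∀ x, g (pts x) = lbl x := by
  set s := Set.range fun x => (pts x, lbl x)
  have hs : s.Finite := Set.finite_range _
  have hD := isProbabilityMeasure_uniformOn hs (Set.range_nonempty _)
  have hH0 : errStar (uniformOn s) H = 0 := by
    obtain ⟨h, hh, hfit⟩ := hH
    refine le_antisymm ((iInf₂_le h hh).trans ((uniformOn_eq_zero_iff hs).2 ?_).le) zero_le
    ext p
    simp only [Set.mem_inter_iff, Set.mem_ofPred_eq, Set.mem_empty_iff_false, iff_false, not_and,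
      not_not]
    rintro ⟨x, rfl⟩
    exact hfit x
  by_contra! hno
  have hlow : (Measure.count s)⁻¹ ≤ errStar (uniformOn s) G := le_iInf₂ fun g hg => by
    obtain ⟨x, hx⟩ := hno g hg
    calc (Measure.count s)⁻¹ = uniformOn s {(pts x, lbl x)} := by
          rw [uniformOn, cond_apply hs.measurableSet,
            Set.inter_singleton_of_mem (Set.mem_range_self x), Measure.count_singleton, mul_one]
      _ ≤ _ := measure_mono (Set.singleton_subset_iff.2 hx)
  exact ENNReal.inv_ne_zero.2 (Measure.count_apply_lt_top.2 hs).ne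
    (le_zero_iff.1 (hlow.trans ((hGH _ hD).trans hH0.le)))

theorem ShattersAgainst.of_errStar_le {Y Y' : Type*} [MeasurableSpace Y]
    [MeasurableSingletonClass Y] {k : ℕ} {G : Set (Y' → Fin k)} {H : Set (Y → Fin k)}
    {ι : Y → Y'}
    (hGH : ∀ D : Measure (Y × Fin k), IsProbabilityMeasure D →
      errStar D ((fun g => g ∘ ι) '' G) ≤ errStar D H)
    {X : Type*} [Finite X] [Nonempty X] {pts : X → Y} {a : Fin k} {f : X → Fin k}
    (h : ShattersAgainst H pts a f) : ShattersAgainst G (ι ∘ pts) a f := fun τ => by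
  obtain ⟨_, ⟨g, hg, rfl⟩, hfit⟩ := exists_mem_forall_eq_of_errStar_le hGH pts _ (h τ)
  exact ⟨g, hg, hfit⟩

-- A linear dependence `∑ g x • aug (pts x) = 0` with some `g x₀ > 0` is paired with the
-- halfspace realizing `{x | g x ≤ 0}`: the resulting sum is `0`, yet all its terms are `≤ 0`
-- and the `x₀` term is `< 0`.
theorem card_le_of_halfspace_shatters {n : ℕ} {X : Type*} [Fintype X] (pts : X → Fin n → ℝ)
    (h : ∀ τ : X → Bool, ∃ c ∈ halfspace n, ∀ x, c (pts x) = τ x) : Fintype.card X ≤ n + 1 := by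
  by_contra! hcard
  have hdep : ¬ LinearIndependent ℝ fun x => aug (pts x) := fun hli => by
    simpa using hli.fintype_card_le_finrank |>.trans_lt' hcard
  obtain ⟨g, hg, x₀, hx₀⟩ := Fintype.not_linearIndependent_iff.mp hdep
  obtain ⟨g, hg, hx₀⟩ : ∃ g : X → ℝ, ∑ x, g x • aug (pts x) = 0 ∧ 0 < g x₀ := by
    rcases hx₀.lt_or_gt with hneg | hpos
    · exact ⟨-g, by simp [neg_smul, hg], by simpa using hneg⟩
    · exact ⟨g, hg, hpos⟩
  obtain ⟨c, ⟨w, rfl⟩, hc⟩ := h fun x => decide (g x ≤ 0)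
  have hsign : ∀ x, 0 ≤ w ⬝ᵥ aug (pts x) ↔ g x ≤ 0 := fun x => by simpa [dotProduct] using hc x
  have hterm : ∀ x, g x * (w ⬝ᵥ aug (pts x)) ≤ 0 ∧ (0 < g x → g x * (w ⬝ᵥ aug (pts x)) < 0) := by
    intro x
    rcases le_or_gt (g x) 0 with hx | hx
    · exact ⟨mul_nonpos_of_nonpos_of_nonneg hx ((hsign x).2 hx), fun h => absurd h hx.not_gt⟩
    · have hw : w ⬝ᵥ aug (pts x) < 0 := not_le.mp fun h => hx.not_ge ((hsign x).1 h)
      exact ⟨(mul_neg_of_pos_of_neg hx hw).le, fun _ => mul_neg_of_pos_of_neg hx hw⟩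
  have hzero : ∑ x, g x * (w ⬝ᵥ aug (pts x)) = 0 := by
    simp [← smul_eq_mul, ← dotProduct_smul, ← dotProduct_sum, hg]
  exact (Finset.sum_neg' (fun x _ => (hterm x).1)
    ⟨x₀, Finset.mem_univ _, (hterm x₀).2 hx₀⟩).ne hzero

def LTree.OneVsRestDimLE (n : ℕ) {k : ℕ} (T : LTree k) (a : Fin k) (N : ℕ) : Prop :=
  ∀ (X : Type) [Fintype X] (pts : X → Fin n → ℝ) (f : X → Fin k), (∀ x, f x ≠ a) →
    ShattersAgainst (treeClass (halfspace n) T) pts a f → Fintype.card X ≤ N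

theorem treeClass_mem_labels {X : Type*} {k : ℕ} {H : Set (X → Bool)} {T : LTree k}
    {g : X → Fin k} (hg : g ∈ treeClass H T) (x : X) : g x ∈ T.labels := by
  induction T generalizing g with
  | leaf i => simp [Set.mem_singleton_iff.mp hg, LTree.labels]
  | node l r ihl ihr =>
    obtain ⟨c, -, fl, hfl, fr, hfr, rfl⟩ := hg
    cases hcx : c x <;> simp [LTree.labels, hcx, ihl hfl, ihr hfr]

theorem treeClass_node_child {X : Type*} {k : ℕ} {H : Set (X → Bool)} {l r : LTree k}
    (hlr : l.labels.Disjoint r.labels) {g : X → Fin k} (hg : g ∈ treeClass H (.node l r))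
    (s : Bool) : ∃ c ∈ H, ∃ fs ∈ treeClass H (cond s r l), ∀ y,
      (g y ∈ (cond s r l).labels ↔ c y = s) ∧ (c y = s → g y = fs y) := by
  obtain ⟨c, hc, fl, hfl, fr, hfr, rfl⟩ := hg
  refine ⟨c, hc, cond s fr fl, by cases s <;> assumption, fun y => ?_⟩
  have hl := treeClass_mem_labels hfl y
  have hr := treeClass_mem_labels hfr y
  have hl' : fl y ∉ r.labels := fun h => hlr hl h
  have hr' : fr y ∉ l.labels := fun h => hlr h hr
  cases s <;> cases hcy : c y <;> simp [hcy, hl, hr, hl', hr']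

namespace LTree

variable {n k : ℕ}

theorem oneVsRestDimLE_leaf (a : Fin k) : (leaf a).OneVsRestDimLE n a 0 := by
  intro X _ pts f hfa hsh
  obtain ⟨g, hg, hgf⟩ := hsh fun _ => false
  rw [Set.mem_singleton_iff.mp hg] at hgf
  exact (Fintype.card_eq_zero_iff.mpr ⟨fun x => hfa x (hgf x).symm⟩).le

-- Points labelled inside the subtree of `a` are handled by that subtree; on the others the
-- root halfspace alone has to separate `a` from the rest, so they are shattered by halfspaces.
theorem OneVsRestDimLE.node {l r : LTree k} (hlr : l.labels.Disjoint r.labels) {s : Bool}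
    {a : Fin k} (ha : a ∈ (cond s r l).labels) {N : ℕ} (h : (cond s r l).OneVsRestDimLE n a N) :
    (node l r).OneVsRestDimLE n a (N + (n + 1)) := by
  intro X _ pts f hfa hsh
  classical
  set L := (cond s r l).labels
  have hin : Fintype.card {x // f x ∈ L} ≤ N := h _ (fun y => pts y) (fun y => f y)
    (fun y => hfa y) fun τ => by
      obtain ⟨g, hg, hgτ⟩ := hsh fun x => if hx : f x ∈ L then τ ⟨x, hx⟩ else false
      obtain ⟨c, -, fs, hfs, hcg⟩ := treeClass_node_child hlr hg s
      refine ⟨fs, hfs, fun y => ?_⟩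
      have hy := hgτ y
      rw [dif_pos y.2] at hy
      have hmem : g (pts y) ∈ L := by rw [hy]; cases τ y; exacts [y.2, ha]
      rw [← (hcg _).2 ((hcg _).1.1 hmem), hy]
  have hout : Fintype.card {x // f x ∉ L} ≤ n + 1 :=
    card_le_of_halfspace_shatters (fun y => pts y) fun τ => by
      obtain ⟨g, hg, hgτ⟩ := hsh fun x => if hx : f x ∈ L then false else decide (τ ⟨x, hx⟩ = s)
      obtain ⟨c, hc, _, _, hcg⟩ := treeClass_node_child hlr hg s
      refine ⟨c, hc, fun y => ?_⟩
      have hy := hgτ y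
      rw [dif_neg y.2] at hy
      have hcτ : c (pts y) = s ↔ τ y = s := by
        rw [← (hcg _).1, hy]
        by_cases hτ : τ y = s <;> simp only [hτ, decide_true, decide_false, cond_true, cond_false]
        exacts [iff_of_true ha trivial, iff_of_false y.2 id]
      cases s <;> simpa using hcτ
  have := Fintype.card_subtype_compl fun x => f x ∈ L
  have := Fintype.card_subtype_le fun x => f x ∈ L
  omega

theorem exists_oneVsRestDimLE (T : LTree k) (hT : T.labels.Nodup) :
    ∃ a ∈ T.labels, ∃ p, 2 ^ p ≤ T.labels.length ∧ T.OneVsRestDimLE n a (p * (n + 1)) := by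
  induction T with
  | leaf a => exact ⟨a, by simp [labels], 0, by simp [labels], by simpa using oneVsRestDimLE_leaf a⟩
  | node l r ihl ihr =>
    obtain ⟨hl, hr, hlr⟩ := List.nodup_append'.mp hT
    have ih : ∀ b : Bool, ∃ a ∈ (cond b r l).labels, ∃ p, 2 ^ p ≤ (cond b r l).labels.length ∧
        (cond b r l).OneVsRestDimLE n a (p * (n + 1)) := fun b => by
      cases b
      exacts [ihl hl, ihr hr]
    choose a ha p hp hcap using ih
    -- descend into the child whose guaranteed depth is smaller
    obtain ⟨s, hs⟩ : ∃ s, p s ≤ p !s := by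
      rcases le_total (p false) (p true) with h | h
      exacts [⟨false, h⟩, ⟨true, h⟩]
    refine ⟨a s, ?_, p s + 1, ?_, by rw [add_one_mul]; exact (hcap s).node hlr (ha s)⟩
    · have := ha s
      cases s <;> simp_all [labels]
    · have h₁ := hp s
      have h₂ := (Nat.pow_le_pow_right two_pos hs).trans (hp !s)
      cases s <;> simp only [labels, List.length_append, pow_succ, cond_false, cond_true,
        Bool.not_false, Bool.not_true] at h₁ h₂ ⊢ <;> omega

end LTree

theorem argmaxFin_eq_of_forall_lt {k : ℕ} [NeZero k] {f : Fin k → ℝ} {i₀ : Fin k}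
    (h : ∀ j, j ≠ i₀ → f j < f i₀) : argmaxFin f = i₀ := by
  have hmax : (Finset.univ.filter fun i => ∀ j, f j ≤ f i) = {i₀} := by
    ext i
    simp only [Finset.mem_filter, Finset.mem_univ, true_and, Finset.mem_singleton]
    refine ⟨fun hi => by_contra fun hne => (hi i₀).not_gt (h i hne), ?_⟩
    rintro rfl j
    rcases eq_or_ne j i with rfl | hj
    exacts [le_rfl, (h j hj).le]
  simp only [argmaxFin, hmax, Finset.min'_singleton]

theorem argmaxFin_affine_mem_msvm {d k : ℕ} [NeZero k] (u : Fin k → Fin d → ℝ) (β : Fin k → ℝ) :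
    (fun x => argmaxFin fun i => u i ⬝ᵥ x + β i) ∈ msvm d k :=
  ⟨fun i => Fin.snoc (u i) (β i), by simp [aug, Fin.sum_univ_castSucc, dotProduct]⟩

def svmPoint {m : ℕ} (j : Fin (m + 1)) (t : ℝ) : Fin (m + 2) → ℝ :=
  Fin.cons t (Fin.cons (t ^ 2) fun i => if j = i.succ then 1 else 0)

def svmWeight {m : ℕ} (t : ℝ) (σ : Fin (m + 1) → ℝ) : Fin (m + 2) → ℝ :=
  Fin.cons (4 * t) (Fin.cons (-2) fun i => σ i.succ - σ 0)

theorem svmWeight_dotProduct_svmPoint {m : ℕ} (t t' : ℝ) (σ : Fin (m + 1) → ℝ) (j : Fin (m + 1)) :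
    svmWeight t σ ⬝ᵥ svmPoint j t' + (σ 0 - 2 * t ^ 2) = σ j - 2 * (t - t') ^ 2 := by
  have honehot : (fun i : Fin m => σ i.succ - σ 0) ⬝ᵥ (fun i => if j = i.succ then 1 else 0)
      = σ j - σ 0 := by
    cases j using Fin.cases with
    | zero => simp [dotProduct, eq_comm (a := (0 : Fin (m + 1))), Fin.succ_ne_zero]
    | succ j => simp [dotProduct, Fin.succ_inj]
  simp only [svmWeight, svmPoint, dotProduct, Fin.sum_univ_succ, Fin.cons_zero, Fin.cons_succ]
    at honehot ⊢
  linear_combination honehot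

theorem one_le_sq_natCast_sub {m n : ℕ} (h : m ≠ n) : 1 ≤ ((m : ℝ) - n) ^ 2 := by
  have : (1 : ℝ) ≤ |(m : ℝ) - n| := by
    exact_mod_cast Int.one_le_abs (sub_ne_zero.2 (Nat.cast_injective.ne h) : (m : ℤ) - n ≠ 0)
  exact one_le_sq_iff_one_le_abs _ |>.2 this

-- Class `b ≠ a` scores `σ_b j - 2 (b - c)²` at the point `(j, c)` and class `a` scores `0`;
-- with `σ = ±1` the winner at `(j, c)` is therefore `c` if `σ_c j = 1` and `a` if `σ_c j = -1`.
theorem msvm_shattersAgainst (m : ℕ) {k : ℕ} [NeZero k] (a : Fin k) :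
    ShattersAgainst (msvm (m + 2) k)
      (fun p : Fin (m + 1) × {c : Fin k // c ≠ a} => svmPoint p.1 (p.2 : ℕ)) a (fun p => p.2) := by
  intro τ
  let σ : {c : Fin k // c ≠ a} → Fin (m + 1) → ℝ := fun c j => bif τ (j, c) then -1 else 1
  let W : Fin k → Fin (m + 2) → ℝ := fun b =>
    if hb : b = a then 0 else svmWeight (b : ℕ) (σ ⟨b, hb⟩)
  let β : Fin k → ℝ := fun b => if hb : b = a then 0 else σ ⟨b, hb⟩ 0 - 2 * ((b : ℕ) : ℝ) ^ 2
  refine ⟨_, argmaxFin_affine_mem_msvm W β, ?_⟩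
  rintro ⟨j, c, hc⟩
  let S : Fin k → ℝ := fun b =>
    if hb : b = a then 0 else σ ⟨b, hb⟩ j - 2 * (((b : ℕ) : ℝ) - (c : ℕ)) ^ 2
  have hS : (fun b => W b ⬝ᵥ svmPoint j (c : ℕ) + β b) = S := funext fun b => by
    by_cases hb : b = a <;> simp [W, β, S, hb, svmWeight_dotProduct_svmPoint]
  have hσ : ∀ b, σ b j ≤ 1 := fun b => by
    show (bif τ (j, b) then (-1 : ℝ) else 1) ≤ 1
    cases τ (j, b) <;> norm_num
  have hfar : ∀ b, b ≠ a → b ≠ c → S b ≤ -1 := fun b hb hbc => by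
    simp only [S, dif_neg hb]
    nlinarith [hσ ⟨b, hb⟩, one_le_sq_natCast_sub (Fin.val_ne_of_ne hbc)]
  show argmaxFin (fun b => W b ⬝ᵥ svmPoint j (c : ℕ) + β b) = bif τ (j, ⟨c, hc⟩) then a else c
  rw [hS]
  cases hτ : τ (j, ⟨c, hc⟩) <;> simp only [cond_false, cond_true]
  · refine argmaxFin_eq_of_forall_lt fun b hbc => ?_
    have hSc : S c = 1 := by simp [S, hc, σ, hτ]
    by_cases hb : b = a
    · simp [S, hb, hSc]
    · linarith [hfar b hb hbc]
  · refine argmaxFin_eq_of_forall_lt fun b hba => ?_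
    have hSa : S a = 0 := by simp [S]
    by_cases hbc : b = c
    · subst hbc; simp [S, hc, σ, hτ]
    · linarith [hfar b hba hbc]

theorem cast_mul_sub_one_le_logb_mul_log {d k d' p : ℕ} (hd : 2 ≤ d) (hk : 2 ≤ k) (hd' : 2 ≤ d')
    (hp : 2 ^ p ≤ k) (hcard : (d - 1) * (k - 1) ≤ p * (d' + 1)) :
    (d * (k - 1) : ℝ) ≤ 5 * Real.logb 2 k * d' * Real.log (Real.logb 2 k * d') := by
  set L := Real.logb 2 k
  have hlogb : ∀ q : ℕ, 2 ^ q ≤ k → (q : ℝ) ≤ L := fun q hq => by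
    rw [Real.le_logb_iff_rpow_le one_lt_two (by positivity), Real.rpow_natCast]
    exact_mod_cast hq
  have hL : 1 ≤ L := by simpa using hlogb 1 (by simpa using hk)
  have hd'R : (2 : ℝ) ≤ d' := by exact_mod_cast hd'
  have hlog : Real.log 2 ≤ Real.log (L * d') := Real.log_le_log two_pos (by nlinarith)
  have hcardR : ((d : ℝ) - 1) * ((k : ℝ) - 1) ≤ p * (d' + 1) := by
    have := (Nat.cast_le (α := ℝ)).2 hcard
    push_cast [Nat.cast_sub (by omega : 1 ≤ d), Nat.cast_sub (by omega : 1 ≤ k)] at this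
    exact this
  have hdR : (2 : ℝ) ≤ d := by exact_mod_cast hd
  have hkR : (2 : ℝ) ≤ k := by exact_mod_cast hk
  have hpL := hlogb p hp
  calc (d * (k - 1) : ℝ) ≤ 2 * (((d : ℝ) - 1) * ((k : ℝ) - 1)) := by nlinarith
    _ ≤ 2 * (L * (d' + 1)) := by nlinarith
    _ ≤ 3 * L * d' := by nlinarith
    _ ≤ 5 * L * d' * Real.log (L * d') := by
      have : (0 : ℝ) ≤ L * d' := by positivity
      nlinarith [Real.log_two_gt_d9]

/-- There is a universal constant C > 0 such that for all d ≥ 2, k ≥ 3, d' ≥ 2: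
if ι : ℝ^d → ℝ^{d'} is any map and T is a tree for k classes such that W^{d'}_T ∘ ι essentially
contains the multiclass SVM class L over ℝ^d (its approximation error is no larger, for every
probability distribution D over ℝ^d × [k]), then d·(k−1) ≤ C·log₂(k)·d'·log(log₂(k)·d'). -/
theorem stmt11 : ∃ C : ℝ, 0 < C ∧ ∀ (d k d' : ℕ) [NeZero k], 2 ≤ d → 3 ≤ k → 2 ≤ d' →
    ∀ (ι : (Fin d → ℝ) → (Fin d' → ℝ)) (T : LTree k), T.IsTreeFor →
      (∀ (D : Measure ((Fin d → ℝ) × Fin k)), IsProbabilityMeasure D →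
        errStar D ((fun h => h ∘ ι) '' treeClass (halfspace d') T) ≤ errStar D (msvm d k)) →
      (d * (k - 1) : ℝ) ≤ C * Real.logb 2 k * d' * Real.log (Real.logb 2 k * d') := by
  refine ⟨5, by norm_num, fun d k d' _ hd hk hd' ι T hT hcont => ?_⟩
  obtain ⟨a, -, p, hp, hdim⟩ :=
    T.exists_oneVsRestDimLE (n := d') (hT.nodup_iff.2 (List.nodup_finRange k))
  rw [hT.length_eq, List.length_finRange] at hp
  obtain ⟨m, rfl⟩ := Nat.exists_eq_add_of_le' hd
  have : Nontrivial (Fin k) := Fin.nontrivial_iff_two_le.2 (by omega)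
  have : Nonempty {c : Fin k // c ≠ a} := nonempty_subtype.2 (exists_ne a)
  have hcard := hdim _ _ _ (fun p => p.2.2) ((msvm_shattersAgainst m a).of_errStar_le hcont)
  refine cast_mul_sub_one_le_logb_mul_log hd (by omega) hd' hp ?_
  simpa [Fintype.card_subtype_compl] using hcard
end
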